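/- Let σ = ⊕[π_1,…,π_r] with r ≥ 2, where each π_k is a nonempty ⊕-indecomposable permutation, and let p = (p_1,…,p_n) be a pin representation of σ. For every k ∈ {1,…,n}, there is at most one index m ∈ {1,…,r} such that some pin of the m-th child belongs to {p_1,…,p_k} and some pin of the m-th child belongs to {p_{k+1},…,p_n}. -/
import Mathlib


namespace PinStmt

abbrev Point : Type := ℝ × ℝ

inductive Letter : Type
  | n1 | n2 | n3 | n4 | U | D | L | R
deriving DecidableEq

def Letter.isNum : Letter → Bool
  | .n1 | .n2 | .n3 | .n4 => true
  | _ => false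

/-- `c` is one of the numeral letters 1,2,3,4. -/
def Letter.IsNumeral (c : Letter) : Prop := c.isNum = true

/-- `c` is one of the direction letters U,D,L,R. -/
def Letter.IsDirection (c : Letter) : Prop := c.isNum = false

/-- `q i` lies strictly above all of `q 0, …, q (i-1)`. -/
def AboveAll (q : ℕ → Point) (i : ℕ) : Prop := ∀ j < i, (q j).2 < (q i).2
def BelowAll (q : ℕ → Point) (i : ℕ) : Prop := ∀ j < i, (q i).2 < (q j).2
def RightAll (q : ℕ → Point) (i : ℕ) : Prop := ∀ j < i, (q j).1 < (q i).1
def LeftAll  (q : ℕ → Point) (i : ℕ) : Prop := ∀ j < i, (q i).1 < (q j).1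

/-- The vertical line through `q i` strictly separates `q (i-1)` from `{q j | j < i-1}`. -/
def VLineSep (q : ℕ → Point) (i : ℕ) : Prop :=
  ((q (i - 1)).1 < (q i).1 ∧ ∀ j < i - 1, (q i).1 < (q j).1) ∨
  ((q i).1 < (q (i - 1)).1 ∧ ∀ j < i - 1, (q j).1 < (q i).1)

/-- The horizontal line through `q i` strictly separates `q (i-1)` from `{q j | j < i-1}`. -/
def HLineSep (q : ℕ → Point) (i : ℕ) : Prop :=
  ((q (i - 1)).2 < (q i).2 ∧ ∀ j < i - 1, (q i).2 < (q j).2) ∨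
  ((q i).2 < (q (i - 1)).2 ∧ ∀ j < i - 1, (q j).2 < (q i).2)

/-- Separation condition for the pin `q i`. -/
def SepCond (q : ℕ → Point) (i : ℕ) : Prop := VLineSep q i ∨ HLineSep q i

/-- Independence condition: neither line through `q i` splits `{q j | j < i}` in two
nonempty parts. -/
def IndepCond (q : ℕ → Point) (i : ℕ) : Prop :=
  ¬((∃ j < i, (q j).1 < (q i).1) ∧ (∃ j < i, (q i).1 < (q j).1)) ∧
  ¬((∃ j < i, (q j).2 < (q i).2) ∧ (∃ j < i, (q i).2 < (q j).2))

/-- `q i` lies outside the bounding box of `{q j | j < i}`. -/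
def OutsideBox (q : ℕ → Point) (i : ℕ) : Prop :=
  RightAll q i ∨ LeftAll q i ∨ AboveAll q i ∨ BelowAll q i

/-- `(q 0, …, q (m-1))` is a pin sequence. -/
def IsPinSeq (q : ℕ → Point) (m : ℕ) : Prop :=
  (∀ i < m, ∀ j < m, i ≠ j → (q i).1 ≠ (q j).1 ∧ (q i).2 ≠ (q j).2) ∧
  (∀ i, 1 ≤ i → i < m → OutsideBox q i ∧ (SepCond q i ∨ IndepCond q i))

/-- `(p 0, …, p (n-1))` is a pin representation of `σ`, where `f` sends the time index of a
pin to the position (index) of the corresponding point in the diagram of `σ`. -/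
def IsPinReprWith {n : ℕ} (σ : Equiv.Perm (Fin n)) (p : ℕ → Point)
    (f : Fin n ≃ Fin n) : Prop :=
  IsPinSeq p n ∧ ∀ j k : Fin n,
    ((p j.val).1 < (p k.val).1 ↔ f j < f k) ∧
    ((p j.val).2 < (p k.val).2 ↔ σ (f j) < σ (f k))

def IsPinRepr {n : ℕ} (σ : Equiv.Perm (Fin n)) (p : ℕ → Point) : Prop :=
  ∃ f, IsPinReprWith σ p f

/-- `σ` is a pin-permutation. -/
def IsPinPerm {n : ℕ} (σ : Equiv.Perm (Fin n)) : Prop := ∃ p, IsPinRepr σ p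

/-- Prepend the origin `p0` to the sequence of pins `p`. -/
def withOrigin (p0 : Point) (p : ℕ → Point) : ℕ → Point
  | 0 => p0
  | i + 1 => p i

/-- The letter encoding the pin `q i` (where `q 0` is the origin). -/
def LetterIs (q : ℕ → Point) (i : ℕ) : Letter → Prop
  | .U => 2 ≤ i ∧ SepCond q i ∧ AboveAll q i
  | .D => 2 ≤ i ∧ SepCond q i ∧ BelowAll q i
  | .L => 2 ≤ i ∧ SepCond q i ∧ LeftAll q i
  | .R => 2 ≤ i ∧ SepCond q i ∧ RightAll q i
  | .n1 => IndepCond q i ∧ RightAll q i ∧ AboveAll q i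
  | .n2 => IndepCond q i ∧ LeftAll q i ∧ AboveAll q i
  | .n3 => IndepCond q i ∧ LeftAll q i ∧ BelowAll q i
  | .n4 => IndepCond q i ∧ RightAll q i ∧ BelowAll q i

/-- `w` is the pin word associated with the pin sequence `(q 0, q 1, …, q n)`,
whose origin is `q 0`. -/
def WordOf (q : ℕ → Point) (n : ℕ) (w : List Letter) : Prop :=
  w.length = n ∧ ∀ i < n, LetterIs q (i + 1) (w.getD i Letter.U)

/-- `P(σ)`: the set of pin words of the permutation `σ`. -/
def PinWords {n : ℕ} (σ : Equiv.Perm (Fin n)) : Set (List Letter) :=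
  { w | ∃ (p : ℕ → Point) (p0 : Point), IsPinRepr σ p ∧
        IsPinSeq (withOrigin p0 p) (n + 1) ∧ WordOf (withOrigin p0 p) n w }

/-- The set of pin words associated with the fixed pin representation `p`
over all admissible origins. -/
def WordsOfRepr (n : ℕ) (p : ℕ → Point) : Set (List Letter) :=
  { w | ∃ p0 : Point, IsPinSeq (withOrigin p0 p) (n + 1) ∧ WordOf (withOrigin p0 p) n w }

/-- `(p 0, …, p (n-1))` is a proper pin sequence: every pin from the third one on
satisfies the separation condition. -/
def IsProperSeq (p : ℕ → Point) (n : ℕ) : Prop :=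
  IsPinSeq p n ∧ ∀ i, 2 ≤ i → i < n → SepCond p i

/-- `σ` is a proper pin-permutation. -/
def IsProperPinPerm {n : ℕ} (σ : Equiv.Perm (Fin n)) : Prop :=
  ∃ p, IsPinRepr σ p ∧ IsProperSeq p n

/-- A strict pin word: a numeral followed only by directions. -/
def IsStrict (w : List Letter) : Prop :=
  ∃ c cs, w = c :: cs ∧ c.IsNumeral ∧ ∀ d ∈ cs, d.IsDirection

/-- A quasi-strict pin word: two numerals followed only by directions. -/
def IsQuasiStrict (w : List Letter) : Prop :=
  ∃ c₁ c₂ cs, w = c₁ :: c₂ :: cs ∧ c₁.IsNumeral ∧ c₂.IsNumeral ∧ ∀ d ∈ cs, d.IsDirection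

/-- `w` is a pin word (of some permutation). -/
def IsPinWord (w : List Letter) : Prop :=
  ∃ (n : ℕ) (σ : Equiv.Perm (Fin n)), w ∈ PinWords σ

/-- `SP`: the set of strict pin words. -/
def SPset : Set (List Letter) := { w | IsPinWord w ∧ IsStrict w }

def phi2 : Letter → Letter → List Letter
  | .n1, .R => [.R, .U, .R]
  | .n2, .R => [.L, .U, .R]
  | .n3, .R => [.L, .D, .R]
  | .n4, .R => [.R, .D, .R]
  | .n1, .L => [.R, .U, .L]
  | .n2, .L => [.L, .U, .L]
  | .n3, .L => [.L, .D, .L]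
  | .n4, .L => [.R, .D, .L]
  | .n1, .U => [.U, .R, .U]
  | .n2, .U => [.U, .L, .U]
  | .n3, .U => [.D, .L, .U]
  | .n4, .U => [.D, .R, .U]
  | .n1, .D => [.U, .R, .D]
  | .n2, .D => [.U, .L, .D]
  | .n3, .D => [.D, .L, .D]
  | .n4, .D => [.D, .R, .D]
  | _, _ => []

def phi1 : Letter → Set (List Letter)
  | .n1 => {[.U, .R], [.R, .U]}
  | .n2 => {[.U, .L], [.L, .U]}
  | .n3 => {[.D, .L], [.L, .D]}
  | .n4 => {[.R, .D], [.D, .R]}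
  | _ => ∅

def phiInv2 : Letter → Letter → Letter
  | .U, .R => .n1
  | .R, .U => .n1
  | .U, .L => .n2
  | .L, .U => .n2
  | .D, .L => .n3
  | .L, .D => .n3
  | .R, .D => .n4
  | .D, .R => .n4
  | _, _ => .n1

/-- `φ(u)`, as a set of words: a two-element set when `u` is a single numeral,
a singleton `{φ(u)}` when `u` is a strict pin word of length at least 2, and
the identity (as a singleton) on words of `M`. -/
def phiSet : List Letter → Set (List Letter)
  | [] => {[]}
  | [c] => if c.isNum then phi1 c else {[c]}
  | c :: d :: rest => if c.isNum then {phi2 c d ++ rest} else {c :: d :: rest}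

/-- The quadrant numeral `q(c,d)`. -/
def quadNum (c d : Letter) : Letter :=
  if c.isNum then
    match phi2 c d with
    | [_, b, e] => phiInv2 b e
    | _ => Letter.n1
  else phiInv2 c d

/-- `us` is the strong numeral-led factor decomposition of `u`. -/
def IsSNLD (u : List Letter) (us : List (List Letter)) : Prop :=
  us.flatten = u ∧ ∀ v ∈ us, IsStrict v

def interleave : List (List Letter) → List (List Letter) → List Letter
  | [], _ => []
  | v :: vs, [] => v ++ interleave vs []
  | v :: vs, w :: ws => v ++ w ++ interleave vs ws

/-- The condition on the pieces `v^(i)`, `w^(i)`, `u^(i)` in the definition of `≼`. -/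
def PieceCond (v wi ui : List Letter) : Prop :=
  (∃ c cs, wi = c :: cs ∧ c.IsNumeral ∧ wi = ui) ∨
  (∃ d ds c, wi = d :: ds ∧ d.IsDirection ∧ v ≠ [] ∧ v.getLast? = some c ∧
    ui = quadNum c d :: ds)

/-- The order `u ≼ w` on pin words. -/
def PinOrder (u w : List Letter) : Prop :=
  ∃ us, IsSNLD u us ∧
    ∃ vs ws : List (List Letter), ws.length = us.length ∧ vs.length = us.length + 1 ∧
      w = interleave vs ws ∧
      ∀ i < us.length, PieceCond (vs.getD i []) (ws.getD i []) (us.getD i [])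

def IsVert (c : Letter) : Prop := c = Letter.U ∨ c = Letter.D
def IsHoriz (c : Letter) : Prop := c = Letter.L ∨ c = Letter.R

/-- `M`: words over `{U,D,L,R}` of length at least 2 with no factor in
`{UU,UD,DU,DD,LL,LR,RL,RR}`. -/
def MSet : Set (List Letter) :=
  { w | 2 ≤ w.length ∧ (∀ c ∈ w, c.IsDirection) ∧
        ∀ a c : Letter, [a, c] <:+: w →
          ¬(IsVert a ∧ IsVert c) ∧ ¬(IsHoriz a ∧ IsHoriz c) }

/-- `A*`: all words over the direction alphabet `A = {U,D,L,R}`. -/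
def Astar : Set (List Letter) := { w | ∀ c ∈ w, c.IsDirection }

/-- Concatenation of languages. -/
def LMul (X Y : Set (List Letter)) : Set (List Letter) :=
  { w | ∃ x ∈ X, ∃ y ∈ Y, w = x ++ y }

/-- The language `L(u) = A* φ(u^(1)) A* φ(u^(2)) … A* φ(u^(j)) A*`. -/
def LangOf (u : List Letter) : Set (List Letter) :=
  { m | ∃ us, IsSNLD u us ∧
      ∃ vs ws : List (List Letter), ws.length = us.length ∧ vs.length = us.length + 1 ∧
        m = interleave vs ws ∧ (∀ v ∈ vs, v ∈ Astar) ∧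
        ∀ i < us.length, ws.getD i [] ∈ phiSet (us.getD i []) }

/-- The language `L_π = ⋃_{u ∈ P(π)} L(u)`. -/
def Lperm {n : ℕ} (π : Equiv.Perm (Fin n)) : Set (List Letter) :=
  { m | ∃ u ∈ PinWords π, m ∈ LangOf u }

/-- `π ≤ σ`: the permutation `π` is a pattern of the permutation `σ`. -/
def IsPattern {k n : ℕ} (π : Equiv.Perm (Fin k)) (σ : Equiv.Perm (Fin n)) : Prop :=
  ∃ g : Fin k → Fin n, StrictMono g ∧ ∀ a b : Fin k, (π a < π b ↔ σ (g a) < σ (g b))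

/-- `q i` lies in the quadrant (given by a numeral letter) of the bounding box of
`{q j | j < m}`. -/
def InQuadOf (q : ℕ → Point) (i m : ℕ) : Letter → Prop
  | .n1 => (∀ j < m, (q j).1 < (q i).1) ∧ (∀ j < m, (q j).2 < (q i).2)
  | .n2 => (∀ j < m, (q i).1 < (q j).1) ∧ (∀ j < m, (q j).2 < (q i).2)
  | .n3 => (∀ j < m, (q i).1 < (q j).1) ∧ (∀ j < m, (q i).2 < (q j).2)
  | .n4 => (∀ j < m, (q j).1 < (q i).1) ∧ (∀ j < m, (q i).2 < (q j).2)
  | _ => False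


/-- `σ = ⊕[π_0, …, π_(r-1)]` where the `k`-th child occupies positions and values
`[b k, b (k+1))`. -/
def SumDecomp {n : ℕ} (σ : Equiv.Perm (Fin n)) (r : ℕ) (b : ℕ → ℕ) : Prop :=
  b 0 = 0 ∧ b r = n ∧ (∀ k < r, b k < b (k + 1)) ∧
  ∀ k < r, ∀ i : Fin n, b k ≤ i.val → i.val < b (k + 1) →
    b k ≤ (σ i).val ∧ (σ i).val < b (k + 1)

/-- The child of `σ` occupying positions `[lo, hi)` is ⊕-indecomposable. -/
def ChildIndecomp {n : ℕ} (σ : Equiv.Perm (Fin n)) (lo hi : ℕ) : Prop :=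
  ¬ ∃ m, lo < m ∧ m < hi ∧ ∀ i : Fin n, lo ≤ i.val → i.val < m → (σ i).val < m

/-- The pin read at time `a` belongs to the `k`-th child (`f` sends times to positions). -/
def PinInChild {n : ℕ} (b : ℕ → ℕ) (f : Fin n ≃ Fin n) (a : Fin n) (k : ℕ) : Prop :=
  b k ≤ (f a).val ∧ (f a).val < b (k + 1)

/-- The set of (times of) pins belonging to the `k`-th child. -/
def ChildPins {n : ℕ} (b : ℕ → ℕ) (f : Fin n ≃ Fin n) (k : ℕ) : Set (Fin n) :=
  { a | PinInChild b f a k }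

/-- The starting times of the maximal runs of consecutive reading times in `S`. -/
def PieceStarts {n : ℕ} (S : Set (Fin n)) : Set (Fin n) :=
  { a | a ∈ S ∧ ∀ c : Fin n, c.val + 1 = a.val → c ∉ S }

/-- `S` is read in exactly `k` pieces. -/
def ReadInPieces {n : ℕ} (S : Set (Fin n)) (k : ℕ) : Prop := (PieceStarts S).ncard = k

/-- The pins of `D` are all read before the pins of `C`. -/
def ReadBefore {n : ℕ} (D C : Set (Fin n)) : Prop := ∀ a ∈ D, ∀ c ∈ C, a < c

/-- The infinite oscillating sequence `ω = 3 1 5 2 7 4 9 6 …` (1-indexed). -/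
def omegaSeq (i : ℕ) : ℕ := if i = 2 then 1 else if i % 2 = 1 then i + 2 else i - 2

/-- `π` is a pattern of some prefix of the infinite oscillating sequence `ω`. -/
def IsOmegaPattern {k : ℕ} (π : Equiv.Perm (Fin k)) : Prop :=
  ∃ g : Fin k → ℕ, StrictMono g ∧ (∀ a, 1 ≤ g a) ∧
    ∀ a b : Fin k, (π a < π b ↔ omegaSeq (g a) < omegaSeq (g b))

/-- The interval of positions `[lo, lo+len)` is a block of `σ`. -/
def IsBlockOf {n : ℕ} (σ : Equiv.Perm (Fin n)) (lo len : ℕ) : Prop :=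
  lo + len ≤ n ∧ ∃ vlo, ∀ i : Fin n,
    (lo ≤ i.val ∧ i.val < lo + len) ↔ (vlo ≤ (σ i).val ∧ (σ i).val < vlo + len)

/-- `σ` is a simple permutation. -/
def IsSimplePerm {n : ℕ} (σ : Equiv.Perm (Fin n)) : Prop :=
  4 ≤ n ∧ ∀ lo len, IsBlockOf σ lo len → len ≤ 1 ∨ len = n

/-- `π` is the permutation whose one-line notation is the list `l`. -/
def PermMatches {k : ℕ} (π : Equiv.Perm (Fin k)) (l : List ℕ) : Prop :=
  l.length = k ∧ ∀ i : Fin k, (π i).val + 1 = l.getD i.val 0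

/-- `ξ` is an increasing oscillation. -/
def IsIncrOsc {k : ℕ} (ξ : Equiv.Perm (Fin k)) : Prop :=
  PermMatches ξ [1] ∨ PermMatches ξ [2, 1] ∨ PermMatches ξ [2, 3, 1] ∨
  PermMatches ξ [3, 1, 2] ∨ (4 ≤ k ∧ IsSimplePerm ξ ∧ IsOmegaPattern ξ)

/-- The child of `σ` occupying positions `[lo, hi)` is order-isomorphic to `ξ`. -/
def ChildIsPerm {n m : ℕ} (σ : Equiv.Perm (Fin n)) (lo hi : ℕ)
    (ξ : Equiv.Perm (Fin m)) : Prop :=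
  lo + m = hi ∧ ∀ (a c : Fin m) (ia ic : Fin n), ia.val = lo + a.val → ic.val = lo + c.val →
    ((σ ia).val < (σ ic).val ↔ (ξ a).val < (ξ c).val)

/-- The child of `σ` occupying positions `[lo, hi)` is an increasing oscillation. -/
def ChildIsIncrOsc {n : ℕ} (σ : Equiv.Perm (Fin n)) (lo hi : ℕ) : Prop :=
  ∃ (m : ℕ) (ξ : Equiv.Perm (Fin m)), IsIncrOsc ξ ∧ ChildIsPerm σ lo hi ξ

/-- `τ = ⊕[ξ, η]`. -/
def IsDSum2 {m k l : ℕ} (τ : Equiv.Perm (Fin m)) (ξ : Equiv.Perm (Fin k))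
    (η : Equiv.Perm (Fin l)) : Prop :=
  m = k + l ∧ (∀ i : Fin m, i.val < k → (τ i).val < k) ∧
    ChildIsPerm τ 0 k ξ ∧ ChildIsPerm τ k m η

/-- The origin `p0` lies in quadrant 1 of the bounding box of `{p j | j < n}`. -/
def OriginQ1 (p0 : Point) (p : ℕ → Point) (n : ℕ) : Prop :=
  ∀ j < n, (p j).1 < p0.1 ∧ (p j).2 < p0.2

/-- The origin `p0` lies in quadrant 3 of the bounding box of `{p j | j < n}`. -/
def OriginQ3 (p0 : Point) (p : ℕ → Point) (n : ℕ) : Prop :=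
  ∀ j < n, p0.1 < (p j).1 ∧ p0.2 < (p j).2

/-- `P^(1)(ξ)`: pin words of `ξ` whose origin lies in quadrant 1 w.r.t. the points of `ξ`. -/
def PinWordsQ1 {n : ℕ} (ξ : Equiv.Perm (Fin n)) : Set (List Letter) :=
  { w | ∃ (p : ℕ → Point) (p0 : Point), IsPinRepr ξ p ∧
        IsPinSeq (withOrigin p0 p) (n + 1) ∧ WordOf (withOrigin p0 p) n w ∧ OriginQ1 p0 p n }

/-- `P^(3)(ξ)`: pin words of `ξ` whose origin lies in quadrant 3 w.r.t. the points of `ξ`. -/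
def PinWordsQ3 {n : ℕ} (ξ : Equiv.Perm (Fin n)) : Set (List Letter) :=
  { w | ∃ (p : ℕ → Point) (p0 : Point), IsPinRepr ξ p ∧
        IsPinSeq (withOrigin p0 p) (n + 1) ∧ WordOf (withOrigin p0 p) n w ∧ OriginQ3 p0 p n }

/-- The shuffle product of two sequences of sets of words. -/
def ShuffleSeq : List (Set (List Letter)) → List (Set (List Letter)) → Set (List Letter)
  | [], [] => {[]}
  | X :: As, [] => { w | ∃ x ∈ X, ∃ t ∈ ShuffleSeq As [], w = x ++ t }
  | [], Y :: Bs => { w | ∃ y ∈ Y, ∃ t ∈ ShuffleSeq ([] : List (Set (List Letter))) Bs, w = y ++ t }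
  | X :: As, Y :: Bs =>
      { w | (∃ x ∈ X, ∃ t ∈ ShuffleSeq As (Y :: Bs), w = x ++ t) ∨
            (∃ y ∈ Y, ∃ t ∈ ShuffleSeq (X :: As) Bs, w = y ++ t) }
  termination_by A B => A.length + B.length

/-- The `p`-fold repetition `x^p` of the word `x`. -/
def repW (p : ℕ) (x : List Letter) : List Letter := (List.replicate p x).flatten

/-- The points of `ξ` at positions `i` and `j` form an active knight of `ξ`:
they occur (in some order) as the first two pins of some pin representation of `ξ`. -/
def ActiveKnight {k : ℕ} (ξ : Equiv.Perm (Fin k)) (i j : Fin k) : Prop :=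
  ∃ (p : ℕ → Point) (f : Fin k ≃ Fin k) (h2 : 2 ≤ k),
    IsPinReprWith ξ p f ∧
    ((f ⟨0, by omega⟩ = i ∧ f ⟨1, by omega⟩ = j) ∨
     (f ⟨0, by omega⟩ = j ∧ f ⟨1, by omega⟩ = i))

/-- The points at positions `i`, `j` are in horizontal knight position. -/
def KnightH {k : ℕ} (ξ : Equiv.Perm (Fin k)) (i j : Fin k) : Prop :=
  (i.val + 2 = j.val ∨ j.val + 2 = i.val) ∧
  ((ξ i).val + 1 = (ξ j).val ∨ (ξ j).val + 1 = (ξ i).val)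

/-- The points at positions `i`, `j` are in vertical knight position. -/
def KnightV {k : ℕ} (ξ : Equiv.Perm (Fin k)) (i j : Fin k) : Prop :=
  (i.val + 1 = j.val ∨ j.val + 1 = i.val) ∧
  ((ξ i).val + 2 = (ξ j).val ∨ (ξ j).val + 2 = (ξ i).val)

inductive KType : Type
  | H | V

def KnightOfType {k : ℕ} (t : KType) (ξ : Equiv.Perm (Fin k)) (i j : Fin k) : Prop :=
  match t with
  | .H => KnightH ξ i j
  | .V => KnightV ξ i j

/-- The increasing oscillation `ξ` has type `(x, y)`: its lower-left active knight
(the one containing the leftmost point) has knight-position type `x` and its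
upper-right active knight (the one containing the rightmost point) has type `y`. -/
def HasOscType {k : ℕ} (ξ : Equiv.Perm (Fin k)) (x y : KType) : Prop :=
  ∃ i j i' j' : Fin k, ActiveKnight ξ i j ∧ ActiveKnight ξ i' j' ∧
    i.val = 0 ∧ j'.val + 1 = k ∧ KnightOfType x ξ i j ∧ KnightOfType y ξ i' j'

/-- The permutation 21. -/
def perm21 : Equiv.Perm (Fin 2) := Equiv.swap 0 1

/-- The permutation 12. -/
def perm12 : Equiv.Perm (Fin 2) := Equiv.refl (Fin 2)

def EndsH (w : List Letter) : Prop := w.getLast? = some Letter.R ∨ w.getLast? = some Letter.L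
def EndsV (w : List Letter) : Prop := w.getLast? = some Letter.U ∨ w.getLast? = some Letter.D

/-- `Q⁻`: quasi-strict pin words of 21. -/
def Qminus : Set (List Letter) := { w | w ∈ PinWords perm21 ∧ IsQuasiStrict w }
/-- `S⁻_H`: strict pin words of 21 ending with R or L. -/
def SminusH : Set (List Letter) := { w | w ∈ PinWords perm21 ∧ IsStrict w ∧ EndsH w }
/-- `S⁻_V`: strict pin words of 21 ending with U or D. -/
def SminusV : Set (List Letter) := { w | w ∈ PinWords perm21 ∧ IsStrict w ∧ EndsV w }
/-- `Q⁺`: quasi-strict pin words of 12. -/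
def Qplus : Set (List Letter) := { w | w ∈ PinWords perm12 ∧ IsQuasiStrict w }
/-- `S⁺_H`: strict pin words of 12 ending with R or L. -/
def SplusH : Set (List Letter) := { w | w ∈ PinWords perm12 ∧ IsStrict w ∧ EndsH w }
/-- `S⁺_V`: strict pin words of 12 ending with U or D. -/
def SplusV : Set (List Letter) := { w | w ∈ PinWords perm12 ∧ IsStrict w ∧ EndsV w }

/-- `P^mix(ξ_i, ξ_j)` for `τ = ⊕[ξ_i, ξ_j]` with `|ξ_i| = s1`: pin words associated
with a pin representation of `τ` reading one of the two children in two pieces. -/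
def Pmix {m : ℕ} (τ : Equiv.Perm (Fin m)) (s1 : ℕ) : Set (List Letter) :=
  { w | ∃ (p : ℕ → Point) (p0 : Point) (f : Fin m ≃ Fin m),
      IsPinReprWith τ p f ∧ IsPinSeq (withOrigin p0 p) (m + 1) ∧
      WordOf (withOrigin p0 p) m w ∧
      (ReadInPieces { a : Fin m | (f a).val < s1 } 2 ∨
       ReadInPieces { a : Fin m | s1 ≤ (f a).val } 2) }

/-- The set of words `{13, 23, 33, 43, 1D, 4D}`. -/
def W13D : Set (List Letter) :=
  {[Letter.n1, Letter.n3], [Letter.n2, Letter.n3], [Letter.n3, Letter.n3],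
   [Letter.n4, Letter.n3], [Letter.n1, Letter.D], [Letter.n4, Letter.D]}

/-- The set of words `{13, 23, 33, 43, 1L, 2L}`. -/
def W13L : Set (List Letter) :=
  {[Letter.n1, Letter.n3], [Letter.n2, Letter.n3], [Letter.n3, Letter.n3],
   [Letter.n4, Letter.n3], [Letter.n1, Letter.L], [Letter.n2, Letter.L]}

/-- `M_2 = {UR, UL, DR, DL, RU, RD, LU, LD}`. -/
def M2Set : Set (List Letter) :=
  {[Letter.U, Letter.R], [Letter.U, Letter.L], [Letter.D, Letter.R], [Letter.D, Letter.L],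
   [Letter.R, Letter.U], [Letter.R, Letter.D], [Letter.L, Letter.U], [Letter.L, Letter.D]}

/-- `E^s_π`: the words `φ(u)` for `u ∈ P(π)` strict. -/
def EsSet {n : ℕ} (π : Equiv.Perm (Fin n)) : Set (List Letter) :=
  { v | ∃ u ∈ PinWords π, IsStrict u ∧ v ∈ phiSet u }

/-- `E^qs_π`: the words `φ(u^(2))` for `u = u^(1)u^(2) ∈ P(π)` quasi-strict. -/
def EqsSet {n : ℕ} (π : Equiv.Perm (Fin n)) : Set (List Letter) :=
  { v | ∃ u ∈ PinWords π, IsQuasiStrict u ∧ ∃ u1 u2, IsSNLD u [u1, u2] ∧ v ∈ phiSet u2 }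


private lemma bmono {r : ℕ} {b : ℕ → ℕ} (h : ∀ k < r, b k < b (k + 1)) :
    ∀ i j, i ≤ j → j ≤ r → b i ≤ b j := by
  intro i j hij hjr
  induction j with
  | zero => have : i = 0 := by omega
            simp [this]
  | succ j ih =>
    rcases Nat.lt_or_ge i (j + 1) with hlt | hge
    · have h1 : b i ≤ b j := ih (by omega) (by omega)
      have h2 : b j < b (j + 1) := h j (by omega)
      omega
    · have : i = j + 1 := by omega
      simp [this]

/-- If some point at least two steps older than pin `u` is strictly SW of it, then
every point at least two steps older is strictly SW of it. -/
private lemma lemNE {n : ℕ} {p : ℕ → Point} (hps : IsPinSeq p n) {u a i : ℕ}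
    (hu : u < n) (ha : a + 2 ≤ u) (hi : i + 2 ≤ u)
    (hax : (p a).1 < (p u).1) (hay : (p a).2 < (p u).2) :
    (p i).1 < (p u).1 ∧ (p i).2 < (p u).2 := by
  obtain ⟨hdist, hcond⟩ := hps
  obtain ⟨hob, hsi⟩ := hcond u (by omega) hu
  by_contra hcon
  have hne := hdist i (by omega) u hu (by omega)
  have hx_or : (p u).1 < (p i).1 ∨ (p u).2 < (p i).2 := by
    rcases not_and_or.mp hcon with h | h
    · exact Or.inl (lt_of_le_of_ne (not_lt.mp h) hne.1.symm)
    · exact Or.inr (lt_of_le_of_ne (not_lt.mp h) hne.2.symm)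
  rcases hx_or with hx | hy
  · rcases hsi with hsep | hindep
    · rcases hsep with hv | hh
      · rcases hv with ⟨h1, hall⟩ | ⟨h1, hall⟩
        · linarith [hall a (by omega)]
        · linarith [hall i (by omega)]
      · rcases hh with ⟨h1, hall⟩ | ⟨h1, hall⟩
        · linarith [hall a (by omega)]
        · rcases hob with hR | hL | hA | hB
          · linarith [hR i (by omega)]
          · linarith [hL a (by omega)]
          · linarith [hA (u - 1) (by omega)]
          · linarith [hB a (by omega)]
    · exact hindep.1 ⟨⟨a, by omega, hax⟩, ⟨i, by omega, hx⟩⟩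
  · rcases hsi with hsep | hindep
    · rcases hsep with hv | hh
      · rcases hv with ⟨h1, hall⟩ | ⟨h1, hall⟩
        · linarith [hall a (by omega)]
        · rcases hob with hR | hL | hA | hB
          · linarith [hR (u - 1) (by omega)]
          · linarith [hL a (by omega)]
          · linarith [hA i (by omega)]
          · linarith [hB a (by omega)]
      · rcases hh with ⟨h1, hall⟩ | ⟨h1, hall⟩
        · linarith [hall a (by omega)]
        · linarith [hall i (by omega)]
    · exact hindep.2 ⟨⟨a, by omega, hay⟩, ⟨i, by omega, hy⟩⟩

/-- Symmetric version: if some point at least two steps older than pin `u` is strictly NE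
of it, then every point at least two steps older is strictly NE of it. -/
private lemma lemSW {n : ℕ} {p : ℕ → Point} (hps : IsPinSeq p n) {u a i : ℕ}
    (hu : u < n) (ha : a + 2 ≤ u) (hi : i + 2 ≤ u)
    (hax : (p u).1 < (p a).1) (hay : (p u).2 < (p a).2) :
    (p u).1 < (p i).1 ∧ (p u).2 < (p i).2 := by
  obtain ⟨hdist, hcond⟩ := hps
  obtain ⟨hob, hsi⟩ := hcond u (by omega) hu
  by_contra hcon
  have hne := hdist i (by omega) u hu (by omega)
  have hx_or : (p i).1 < (p u).1 ∨ (p i).2 < (p u).2 := by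
    rcases not_and_or.mp hcon with h | h
    · exact Or.inl (lt_of_le_of_ne (not_lt.mp h) hne.1)
    · exact Or.inr (lt_of_le_of_ne (not_lt.mp h) hne.2)
  rcases hx_or with hx | hy
  · rcases hsi with hsep | hindep
    · rcases hsep with hv | hh
      · rcases hv with ⟨h1, hall⟩ | ⟨h1, hall⟩
        · linarith [hall i (by omega)]
        · linarith [hall a (by omega)]
      · rcases hh with ⟨h1, hall⟩ | ⟨h1, hall⟩
        · rcases hob with hR | hL | hA | hB
          · linarith [hR a (by omega)]
          · linarith [hL i (by omega)]
          · linarith [hA a (by omega)]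
          · linarith [hB (u - 1) (by omega)]
        · linarith [hall a (by omega)]
    · exact hindep.1 ⟨⟨i, by omega, hx⟩, ⟨a, by omega, hax⟩⟩
  · rcases hsi with hsep | hindep
    · rcases hsep with hv | hh
      · rcases hv with ⟨h1, hall⟩ | ⟨h1, hall⟩
        · rcases hob with hR | hL | hA | hB
          · linarith [hR a (by omega)]
          · linarith [hL (u - 1) (by omega)]
          · linarith [hA a (by omega)]
          · linarith [hB i (by omega)]
        · linarith [hall a (by omega)]
      · rcases hh with ⟨h1, hall⟩ | ⟨h1, hall⟩
        · linarith [hall i (by omega)]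
        · linarith [hall a (by omega)]
    · exact hindep.2 ⟨⟨i, by omega, hy⟩, ⟨a, by omega, hay⟩⟩

/-- Counting lemma: if the pins of child `d` split into a nonempty part `X` and a
nonempty complement, with every `X`-pin strictly SW (in position and value) of every
non-`X` pin, then child `d` is ⊕-decomposable. -/
private lemma count_contra {n r : ℕ} (σ : Equiv.Perm (Fin n)) (b : ℕ → ℕ) (f : Fin n ≃ Fin n)
    (hbr : b r = n)
    (hmono : ∀ i j, i ≤ j → j ≤ r → b i ≤ b j)
    (hvals : ∀ m < r, ∀ i : Fin n, b m ≤ i.val → i.val < b (m + 1) →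
      b m ≤ (σ i).val ∧ (σ i).val < b (m + 1))
    {d : ℕ} (hd : d < r) (X : Fin n → Prop) [DecidablePred X]
    (hne₁ : ∃ a : Fin n, X a ∧ b d ≤ (f a).val ∧ (f a).val < b (d + 1))
    (hne₂ : ∃ a : Fin n, ¬X a ∧ b d ≤ (f a).val ∧ (f a).val < b (d + 1))
    (horder : ∀ i g : Fin n, X i → ¬X g →
      b d ≤ (f i).val → (f i).val < b (d + 1) → b d ≤ (f g).val → (f g).val < b (d + 1) →
      (f i).val < (f g).val ∧ (σ (f i)).val < (σ (f g)).val) :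
    ¬ ChildIndecomp σ (b d) (b (d + 1)) := by
  intro hcind
  apply hcind
  classical
  set G : Finset (Fin n) :=
    Finset.univ.filter (fun a => ¬X a ∧ b d ≤ (f a).val ∧ (f a).val < b (d + 1)) with hGdef
  have hmemG : ∀ a : Fin n, a ∈ G ↔ ¬X a ∧ b d ≤ (f a).val ∧ (f a).val < b (d + 1) := by
    intro a; simp [hGdef]
  obtain ⟨g₀, hg₀⟩ := hne₂
  have hGne : G.Nonempty := ⟨g₀, (hmemG g₀).mpr hg₀⟩
  have hposGne : (G.image (fun a => (f a).val)).Nonempty := hGne.image _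
  set m := (G.image (fun a => (f a).val)).min' hposGne with hmdef
  obtain ⟨gm, hgmG, hgm⟩ :=
    Finset.mem_image.mp ((G.image (fun a => (f a).val)).min'_mem hposGne)
  have hgm' := (hmemG gm).mp hgmG
  obtain ⟨e₀, he₀⟩ := hne₁
  have hEpos : ∀ i : Fin n, X i → b d ≤ (f i).val → (f i).val < b (d + 1) → (f i).val < m := by
    intro i hXi h1 h2
    have := (horder i gm hXi hgm'.1 h1 h2 hgm'.2.1 hgm'.2.2).1
    omega
  have hmub : b d < m := by
    have h1 := hEpos e₀ he₀.1 he₀.2.1 he₀.2.2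
    have h2 := he₀.2.1
    omega
  have hmlt : m < b (d + 1) := by
    have := hgm'.2.2
    omega
  have hbd1n : b (d + 1) ≤ n := by
    have := hmono (d + 1) r (by omega) le_rfl
    omega
  refine ⟨m, hmub, hmlt, ?_⟩
  intro i hi1 hi2
  set a := f.symm i with hadef
  have hfa : f a = i := f.apply_symm_apply i
  have hfav : (f a).val = i.val := by rw [hfa]
  by_cases hX : X a
  · by_contra hv
    push_neg at hv
    have hposG : G.image (fun a => (f a).val) = Finset.Ico m (b (d + 1)) := by
      apply Finset.Subset.antisymm
      · intro q hq
        obtain ⟨g, hgG, rfl⟩ := Finset.mem_image.mp hq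
        have hgG' := (hmemG g).mp hgG
        exact Finset.mem_Ico.mpr
          ⟨(G.image (fun a => (f a).val)).min'_le _ (Finset.mem_image_of_mem _ hgG),
           hgG'.2.2⟩
      · intro q hq
        obtain ⟨hq1, hq2⟩ := Finset.mem_Ico.mp hq
        have hqn : q < n := by omega
        have hfaq : (f (f.symm ⟨q, hqn⟩)).val = q := by rw [f.apply_symm_apply]
        have haqd1 : b d ≤ (f (f.symm ⟨q, hqn⟩)).val := by omega
        have haqd2 : (f (f.symm ⟨q, hqn⟩)).val < b (d + 1) := by omega
        have hXaq : ¬X (f.symm ⟨q, hqn⟩) := by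
          intro hXaq
          have := hEpos _ hXaq haqd1 haqd2
          omega
        refine Finset.mem_image.mpr ⟨f.symm ⟨q, hqn⟩, (hmemG _).mpr ⟨hXaq, haqd1, haqd2⟩, hfaq⟩
    have hinj1 : Set.InjOn (fun a : Fin n => (f a).val) G := by
      intro x _ y _ hxy
      exact f.injective (Fin.val_injective hxy)
    have hcardG : G.card = b (d + 1) - m := by
      rw [← Finset.card_image_of_injOn hinj1, hposG, Nat.card_Ico]
    have hinj2 : Set.InjOn (fun a : Fin n => (σ (f a)).val) G := by
      intro x _ y _ hxy
      exact f.injective (σ.injective (Fin.val_injective hxy))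
    have hvalsub : G.image (fun a => (σ (f a)).val) ⊆
        Finset.Ico ((σ i).val + 1) (b (d + 1)) := by
      intro q hq
      obtain ⟨g, hgG, rfl⟩ := Finset.mem_image.mp hq
      have hgG' := (hmemG g).mp hgG
      have h1 := (horder a g hX hgG'.1 (by omega) (by omega) hgG'.2.1 hgG'.2.2).2
      have h2 := (hvals d hd (f g) hgG'.2.1 hgG'.2.2).2
      rw [hfa] at h1
      exact Finset.mem_Ico.mpr ⟨by omega, h2⟩
    have hle := Finset.card_le_card hvalsub
    rw [Finset.card_image_of_injOn hinj2, hcardG, Nat.card_Ico] at hle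
    omega
  · have haG : a ∈ G := (hmemG a).mpr ⟨hX, by omega, by omega⟩
    have := (G.image (fun a => (f a).val)).min'_le _ (Finset.mem_image_of_mem _ haG)
    omega

private lemma key {n r : ℕ} {σ : Equiv.Perm (Fin n)} {b : ℕ → ℕ}
    (hdec : SumDecomp σ r b)
    (hind : ∀ k < r, ChildIndecomp σ (b k) (b (k + 1)))
    {p : ℕ → Point} {f : Fin n ≃ Fin n} (hp : IsPinReprWith σ p f)
    {k c d : ℕ} (hcd : c < d) (hdr : d < r)
    (hc1 : ∃ a : Fin n, a.val < k ∧ a ∈ ChildPins b f c)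
    (hc2 : ∃ a : Fin n, k ≤ a.val ∧ a ∈ ChildPins b f c)
    (hd1 : ∃ a : Fin n, a.val < k ∧ a ∈ ChildPins b f d)
    (hd2 : ∃ a : Fin n, k ≤ a.val ∧ a ∈ ChildPins b f d) : False := by
  obtain ⟨hb0, hbr, hstep, hchild⟩ := hdec
  have hmono := bmono hstep
  obtain ⟨hps, hord⟩ := hp
  have hmem : ∀ (a : Fin n) (m : ℕ),
      a ∈ ChildPins b f m ↔ (b m ≤ (f a).val ∧ (f a).val < b (m + 1)) := fun a m => Iff.rfl
  have hcd1 : b (c + 1) ≤ b d := hmono (c + 1) d (by omega) (by omega)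
  have hcross : ∀ (x y : Fin n), x ∈ ChildPins b f c → y ∈ ChildPins b f d →
      (p x.val).1 < (p y.val).1 ∧ (p x.val).2 < (p y.val).2 := by
    intro x y hx hy
    obtain ⟨hx1, hx2⟩ := (hmem x c).mp hx
    obtain ⟨hy1, hy2⟩ := (hmem y d).mp hy
    have hfx : f x < f y := by
      rw [Fin.lt_def]; omega
    have hvx := hchild c (by omega) (f x) hx1 hx2
    have hvy := hchild d hdr (f y) hy1 hy2
    have hsx : σ (f x) < σ (f y) := by rw [Fin.lt_def]; omega
    exact ⟨(hord x y).1.mpr hfx, (hord x y).2.mpr hsx⟩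
  obtain ⟨a₁, ha₁k, ha₁⟩ := hc1
  obtain ⟨a₂, ha₂k, ha₂⟩ := hd1
  obtain ⟨g₂, hg₂k, hg₂⟩ := hd2
  have hkn : k < n := lt_of_le_of_lt hg₂k g₂.isLt
  by_cases hκd : (⟨k, hkn⟩ : Fin n) ∈ ChildPins b f d
  · -- attack child c: no child-c pin at time exactly k
    obtain ⟨hκ1, hκ2⟩ := (hmem _ d).mp hκd
    have hlate : ∀ g : Fin n, k ≤ g.val → g ∈ ChildPins b f c → k + 1 ≤ g.val := by
      intro g h1 h2
      obtain ⟨h3, h4⟩ := (hmem g c).mp h2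
      rcases Nat.eq_or_lt_of_le h1 with h | h
      · exfalso
        have : g = (⟨k, hkn⟩ : Fin n) := Fin.ext h.symm
        rw [this] at h3 h4
        omega
      · omega
    refine count_contra σ b f hbr hmono hchild (lt_trans hcd hdr) (fun a => k ≤ a.val)
      ?_ ?_ ?_ (hind c (by omega))
    · obtain ⟨h1, h2⟩ := (hmem _ c).mp (hc2.choose_spec.2)
      exact ⟨hc2.choose, hc2.choose_spec.1, h1, h2⟩
    · obtain ⟨h1, h2⟩ := (hmem a₁ c).mp ha₁
      exact ⟨a₁, by omega, h1, h2⟩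
    · intro i g hXi hXg hi1 hi2 hg1 hg2
      have hik : k + 1 ≤ i.val := hlate i hXi ((hmem i c).mpr ⟨hi1, hi2⟩)
      have hne := hcross i a₂ ((hmem i c).mpr ⟨hi1, hi2⟩) ha₂
      have hres := lemSW hps i.isLt (by omega : a₂.val + 2 ≤ i.val)
        (by omega : g.val + 2 ≤ i.val) hne.1 hne.2
      exact ⟨Fin.lt_def.mp ((hord i g).1.mp hres.1),
             Fin.lt_def.mp ((hord i g).2.mp hres.2)⟩
  · -- attack child d: no child-d pin at time exactly k
    have hlate : ∀ g : Fin n, k ≤ g.val → g ∈ ChildPins b f d → k + 1 ≤ g.val := by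
      intro g h1 h2
      rcases Nat.eq_or_lt_of_le h1 with h | h
      · exfalso
        apply hκd
        have : g = (⟨k, hkn⟩ : Fin n) := Fin.ext h.symm
        rwa [← this]
      · omega
    refine count_contra σ b f hbr hmono hchild hdr (fun a => a.val < k)
      ?_ ?_ ?_ (hind d hdr)
    · obtain ⟨h1, h2⟩ := (hmem a₂ d).mp ha₂
      exact ⟨a₂, ha₂k, h1, h2⟩
    · obtain ⟨h1, h2⟩ := (hmem g₂ d).mp hg₂
      exact ⟨g₂, by omega, h1, h2⟩
    · intro i g hXi hXg hi1 hi2 hg1 hg2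
      have hgk : k + 1 ≤ g.val := hlate g (by omega) ((hmem g d).mpr ⟨hg1, hg2⟩)
      have hsw := hcross a₁ g ha₁ ((hmem g d).mpr ⟨hg1, hg2⟩)
      have hres := lemNE hps g.isLt (by omega : a₁.val + 2 ≤ g.val)
        (by omega : i.val + 2 ≤ g.val) hsw.1 hsw.2
      exact ⟨Fin.lt_def.mp ((hord i g).1.mp hres.1),
             Fin.lt_def.mp ((hord i g).2.mp hres.2)⟩

/-- Let `σ = ⊕[π_1, …, π_r]` with nonempty ⊕-indecomposable children
and `p` a pin representation of `σ`. For every `k ∈ {1, …, n}` there is at most one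
child whose pins occur both among the first `k` pins and among the remaining ones. -/
theorem statement_10 {n r : ℕ} (σ : Equiv.Perm (Fin n)) (b : ℕ → ℕ) (hr : 2 ≤ r)
    (hdec : SumDecomp σ r b)
    (hind : ∀ k < r, ChildIndecomp σ (b k) (b (k + 1)))
    (p : ℕ → Point) (f : Fin n ≃ Fin n) (hp : IsPinReprWith σ p f) :
    ∀ k, 1 ≤ k → k ≤ n →
      ∀ m₁ m₂, m₁ < r → m₂ < r →
        ((∃ a : Fin n, a.val < k ∧ a ∈ ChildPins b f m₁) ∧
         (∃ a : Fin n, k ≤ a.val ∧ a ∈ ChildPins b f m₁)) →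
        ((∃ a : Fin n, a.val < k ∧ a ∈ ChildPins b f m₂) ∧
         (∃ a : Fin n, k ≤ a.val ∧ a ∈ ChildPins b f m₂)) →
        m₁ = m₂ := by
  intro k hk1 hkn m₁ m₂ hm₁ hm₂ h₁ h₂
  by_contra hne
  rcases Nat.lt_or_ge m₁ m₂ with h | h
  · exact key hdec hind hp h hm₂ h₁.1 h₁.2 h₂.1 h₂.2
  · have h' : m₂ < m₁ := by omega
    exact key hdec hind hp h' hm₁ h₂.1 h₂.2 h₁.1 h₁.2

end PinStmt
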